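/- arXiv:1104.0508 — 2 statements merged into one kernel-verified Lean document; each statement's English description precedes it below -/
import Mathlib

section
/- Let G:(0,1)→(0,∞) be a concave function and let (Ψ_t)_{t≥0} be the associated family, i.e. Ψ_t(0)=0 and, for x∈(0,1], Ψ_t(x)=inf{y∈[x,1] : ∫_x^y 1/G(s) ds = t} (inf ∅ = 1). Then the following are equivalent: (a) G is strictly concave on (0,1) (i.e. G(λx+(1−λ)y) > λG(x)+(1−λ)G(y) for all x≠y in (0,1) and λ∈(0,1)); (b) for every t>0, Ψ_t is strictly concave on the set {x∈[0,1] : Ψ_t(x)<1} (i.e. Ψ_t(λx+(1−λ)y) > λΨ_t(x)+(1−λ)Ψ_t(y) for all x≠y in this set and λ∈(0,1)). -/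
/-!
Write `H_x(y) = ∫_x^y 1/G`. For `Ψ_t(x) < 1`, `Ψ_t(x)` is the position at time `t` of the flow
`u' = G(u)` started at `x`, i.e. of the inverse of `H_x`. For two such flows `u₁, u₂` and
`w = l u₁ + (1 - l) u₂`, substituting `s = w(τ)` gives `∫_{w(0)}^{w(t)} 1/G = ∫_0^t w' / G(w)`
with `w' = l G(u₁) + (1 - l) G(u₂)`. If `G` is strictly concave then `w' < G(w)`, so `w` falls
behind the flow started at `w(0)`, which is the strict concavity of `Ψ_t`; at the point `0`,
where `Ψ_t(0) = 0`, the same argument runs with `w = c u₂` and `c G(v) < G(c v)`. Conversely, a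
concave `G` that is not strictly concave is affine on a segment, along which `w' = G(w)` for two
flows staying in the segment, so `Ψ_t` is affine there.
-/

open Set MeasureTheory Filter Topology Function

/-- The convention `inf ∅ = 1` is realized by adjoining `1` to the set, which does not change the
infimum of a nonempty subset of `[x, 1]`. -/
noncomputable def assocPsi (G : ℝ → ℝ) (t x : ℝ) : ℝ :=
  if x = 0 then 0
  else sInf ({y | y ∈ Set.Icc x 1 ∧ ∫ s in x..y, (G s)⁻¹ = t} ∪ {1})

def IsConcaveDistortion (Ψ : ℝ → ℝ) : Prop :=
  MonotoneOn Ψ (Set.Icc 0 1) ∧ ConcaveOn ℝ (Set.Icc 0 1) Ψ ∧ Ψ 0 = 0 ∧ Ψ 1 = 1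

def IsConcaveDistortionSemigroup (Ψ : ℝ → ℝ → ℝ) : Prop :=
  (∀ t, 0 ≤ t → IsConcaveDistortion (Ψ t)) ∧
  (∀ s t, 0 ≤ s → 0 ≤ t → ∀ x ∈ Set.Icc (0:ℝ) 1, Ψ s (Ψ t x) = Ψ (s + t) x)

theorem exists_hasDerivAt_inverse_of_deriv_pos {f f' : ℝ → ℝ} {a b : ℝ}
    (hf : ∀ y ∈ Ioo a b, HasDerivAt f (f' y) y) (hf' : ∀ y ∈ Ioo a b, 0 < f' y) :
    ∃ g : ℝ → ℝ, ∀ y ∈ Ioo a b, g (f y) = y ∧ HasDerivAt g (f' y)⁻¹ (f y) := by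
  have hmono : StrictMonoOn f (Ioo a b) :=
    strictMonoOn_of_deriv_pos (convex_Ioo a b)
      (fun y hy => (hf y hy).continuousAt.continuousWithinAt)
      (fun y hy => by rw [interior_Ioo] at hy; rw [(hf y hy).deriv]; exact hf' y hy)
  have himage : ∀ y ∈ Ioo a b, f '' Ioo a b ∈ 𝓝 (f y) := by
    intro y hy
    obtain ⟨y₁, hy₁, hy₁y⟩ := exists_between hy.1
    obtain ⟨y₂, hyy₂, hy₂⟩ := exists_between hy.2
    have hsub : Icc y₁ y₂ ⊆ Ioo a b := Icc_subset_Ioo hy₁ hy₂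
    refine mem_of_superset (Icc_mem_nhds (hmono ⟨hy₁, hy₁y.trans hy.2⟩ hy hy₁y)
      (hmono hy ⟨hy.1.trans hyy₂, hy₂⟩ hyy₂)) ?_
    refine (intermediate_value_Icc (hy₁y.trans hyy₂).le ?_).trans (image_mono hsub)
    exact fun z hz => (hf z (hsub hz)).continuousAt.continuousWithinAt
  set g := invFunOn f (Ioo a b)
  have hgf : LeftInvOn g f (Ioo a b) := hmono.injOn.leftInvOn_invFunOn
  have hg_mono : StrictMonoOn g (f '' Ioo a b) := by
    rintro _ ⟨y, hy, rfl⟩ _ ⟨y', hy', rfl⟩ h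
    rw [hgf hy, hgf hy']
    exact (hmono.lt_iff_lt hy hy').1 h
  refine ⟨g, fun y hy => ⟨hgf hy, ?_⟩⟩
  have hg_cont : ContinuousAt g (f y) :=
    hg_mono.continuousAt_of_image_mem_nhds (himage y hy)
      (by rw [hgf.image_image, hgf hy]; exact isOpen_Ioo.mem_nhds hy)
  refine HasDerivAt.of_local_left_inverse hg_cont (by rw [hgf hy]; exact hf y hy)
    (hf' y hy).ne' ?_
  filter_upwards [himage y hy] with τ hτ using (invFunOn_pos hτ).2

theorem Convex.mul_add_one_sub_mul_mem {s : Set ℝ} (hs : Convex ℝ s) {p q l : ℝ}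
    (hp : p ∈ s) (hq : q ∈ s) (hl : l ∈ Icc (0 : ℝ) 1) : l * p + (1 - l) * q ∈ s := by
  simpa only [smul_eq_mul] using hs hp hq hl.1 (sub_nonneg.2 hl.2) (add_sub_cancel l 1)

theorem strictConcaveOn_iff_forall_lt {s : Set ℝ} {f : ℝ → ℝ} (hs : Convex ℝ s) :
    StrictConcaveOn ℝ s f ↔ ∀ x ∈ s, ∀ y ∈ s, x ≠ y → ∀ l ∈ Ioo (0 : ℝ) 1,
      l * f x + (1 - l) * f y < f (l * x + (1 - l) * y) := by
  refine ⟨fun h x hx y hy hxy l hl => ?_, fun h => ⟨hs, fun x hx y hy hxy a b ha _ hab => ?_⟩⟩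
  · simpa only [smul_eq_mul] using h.2 hx hy hxy hl.1 (sub_pos.2 hl.2) (add_sub_cancel l 1)
  · obtain rfl : b = 1 - a := by linarith
    simpa only [smul_eq_mul] using h x hx y hy hxy a ⟨ha, by linarith⟩

theorem ConcaveOn.mul_le_apply_mul {G : ℝ → ℝ} (hG : ConcaveOn ℝ (Ioo 0 1) G)
    (hG₀ : ∀ x ∈ Ioo (0 : ℝ) 1, 0 ≤ G x) {v c : ℝ} (hv : v ∈ Ioo (0 : ℝ) 1)
    (hc : c ∈ Ioo (0 : ℝ) 1) : c * G v ≤ G (c * v) := by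
  have hcv : 0 < c * v := mul_pos hc.1 hv.1
  have hcv_lt : c * v < v := by nlinarith [hc.2, hv.1]
  -- compare the slopes of `G` on `[ε, c v]` and `[c v, v]`, then let `ε → 0`
  have key : ∀ ε ∈ Ioo 0 (c * v), c * v * G v - v * G (c * v) ≤ ε * (G v - G (c * v)) := by
    intro ε hε
    have hslope := hG.slope_anti_adjacent ⟨hε.1, hε.2.trans (hcv_lt.trans hv.2)⟩ hv hε.2 hcv_lt
    rw [div_le_div_iff₀ (by linarith) (by linarith [hε.2])] at hslope
    nlinarith [mul_nonneg (hG₀ ε ⟨hε.1, hε.2.trans (hcv_lt.trans hv.2)⟩) (sub_nonneg.2 hcv_lt.le)]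
  have hlim : Tendsto (fun ε => ε * (G v - G (c * v))) (𝓝[>] 0) (𝓝 0) :=
    ((continuous_mul_const _).tendsto' 0 0 (zero_mul _)).mono_left nhdsWithin_le_nhds
  have := ge_of_tendsto hlim (eventually_of_mem (Ioo_mem_nhdsGT hcv) key)
  nlinarith [hv.1]

theorem StrictConcaveOn.mul_lt_apply_mul {G : ℝ → ℝ} (hG : StrictConcaveOn ℝ (Ioo 0 1) G)
    (hG₀ : ∀ x ∈ Ioo (0 : ℝ) 1, 0 ≤ G x) {v c : ℝ} (hv : v ∈ Ioo (0 : ℝ) 1)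
    (hc : c ∈ Ioo (0 : ℝ) 1) : c * G v < G (c * v) := by
  -- `c v` is the convex combination `μ (c v / 2) + (1 - μ) v`
  set μ := 2 * (1 - c) / (2 - c)
  have h2c : 0 < 2 - c := by linarith [hc.2]
  have hμ : μ ∈ Ioo (0 : ℝ) 1 := ⟨div_pos (by linarith [hc.2]) h2c,
    (div_lt_one h2c).2 (by linarith [hc.1])⟩
  have hc2 : c / 2 ∈ Ioo (0 : ℝ) 1 := ⟨by linarith [hc.1], by linarith [hc.2]⟩
  have ha : c / 2 * v ∈ Ioo (0 : ℝ) 1 := ⟨mul_pos hc2.1 hv.1, by nlinarith [hc2.2, hv.1, hv.2]⟩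
  have hμc : μ * (c / 2) + (1 - μ) = c := by simp only [μ]; field_simp; ring
  have hcomb : μ * (c / 2 * v) + (1 - μ) * v = c * v := by linear_combination v * hμc
  have hstrict := hG.2 ha hv (by nlinarith [hc2.2, hv.1]) hμ.1 (sub_pos.2 hμ.2)
    (add_sub_cancel μ 1)
  simp only [smul_eq_mul, hcomb] at hstrict
  calc c * G v = μ * (c / 2 * G v) + (1 - μ) * G v := by linear_combination -G v * hμc
    _ ≤ μ * G (c / 2 * v) + (1 - μ) * G v := by
        gcongr
        · exact hμ.1.le
        · exact hG.concaveOn.mul_le_apply_mul hG₀ hv hc2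
    _ < G (c * v) := hstrict

section Flow

variable {G : ℝ → ℝ} (hGc : ContinuousOn G (Ioo 0 1)) (hGpos : ∀ x ∈ Ioo (0 : ℝ) 1, 0 < G x)
include hGc hGpos

theorem continuousOn_inv_Ioo : ContinuousOn (fun s => (G s)⁻¹) (Ioo 0 1) :=
  hGc.inv₀ fun x hx => (hGpos x hx).ne'

theorem intervalIntegrable_inv {a b : ℝ} (ha : a ∈ Ioo (0 : ℝ) 1) (hb : b ∈ Ioo (0 : ℝ) 1) :
    IntervalIntegrable (fun s => (G s)⁻¹) volume a b :=
  ((continuousOn_inv_Ioo hGc hGpos).mono (ordConnected_Ioo.uIcc_subset ha hb)).intervalIntegrable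

theorem hasDerivAt_integral_inv {a y : ℝ} (ha : a ∈ Ioo (0 : ℝ) 1) (hy : y ∈ Ioo (0 : ℝ) 1) :
    HasDerivAt (fun z => ∫ s in a..z, (G s)⁻¹) (G y)⁻¹ y :=
  intervalIntegral.integral_hasDerivAt_right (intervalIntegrable_inv hGc hGpos ha hy)
    ((continuousOn_inv_Ioo hGc hGpos).stronglyMeasurableAtFilter isOpen_Ioo y hy)
    ((continuousOn_inv_Ioo hGc hGpos).continuousAt (isOpen_Ioo.mem_nhds hy))

theorem strictMonoOn_integral_inv {a : ℝ} (ha : a ∈ Ioo (0 : ℝ) 1) :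
    StrictMonoOn (fun z => ∫ s in a..z, (G s)⁻¹) (Ioo 0 1) :=
  strictMonoOn_of_deriv_pos (convex_Ioo 0 1)
    (fun y hy => (hasDerivAt_integral_inv hGc hGpos ha hy).continuousAt.continuousWithinAt)
    (fun y hy => by
      rw [interior_Ioo] at hy
      rw [(hasDerivAt_integral_inv hGc hGpos ha hy).deriv]
      exact inv_pos.2 (hGpos y hy))

theorem assocPsi_eq_of_integral_eq {t x z : ℝ} (hx : x ∈ Ioo (0 : ℝ) 1) (hxz : x ≤ z)
    (hz : z < 1) (h : ∫ s in x..z, (G s)⁻¹ = t) : assocPsi G t x = z := by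
  have hlb : ∀ y ∈ {y | y ∈ Icc x 1 ∧ ∫ s in x..y, (G s)⁻¹ = t} ∪ {1}, z ≤ y := by
    rintro y (⟨hy, hyt⟩ | rfl)
    · by_contra! hyz
      have := strictMonoOn_integral_inv hGc hGpos hx ⟨hx.1.trans_le hy.1, hyz.trans hz⟩
        ⟨hx.1.trans_le hxz, hz⟩ hyz
      simp only [hyt, h, lt_irrefl] at this
    · exact hz.le
  rw [assocPsi, if_neg hx.1.ne']
  exact le_antisymm (csInf_le ⟨z, hlb⟩ (Or.inl ⟨⟨hxz, hz.le⟩, h⟩)) (le_csInf ⟨1, Or.inr rfl⟩ hlb)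

theorem assocPsi_spec {t x : ℝ} (hx : x ∈ Ioo (0 : ℝ) 1) (h : assocPsi G t x < 1) :
    x ≤ assocPsi G t x ∧ ∫ s in x..assocPsi G t x, (G s)⁻¹ = t := by
  have h' := h
  rw [assocPsi, if_neg hx.1.ne'] at h'
  obtain ⟨y, hy | rfl, hy1⟩ := exists_lt_of_csInf_lt (by exact ⟨1, Or.inr rfl⟩) h'
  · rw [assocPsi_eq_of_integral_eq hGc hGpos hx hy.1.1 hy1 hy.2]
    exact ⟨hy.1.1, hy.2⟩
  · exact absurd hy1 (lt_irrefl 1)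

theorem lt_assocPsi_of_integral_lt {t x z : ℝ} (hx : x ∈ Ioo (0 : ℝ) 1) (hxz : x ≤ z)
    (hz : z < 1) (h : ∫ s in x..z, (G s)⁻¹ < t) : z < assocPsi G t x := by
  by_contra! hle
  obtain ⟨hxψ, hψt⟩ := assocPsi_spec hGc hGpos hx (hle.trans_lt hz)
  have := (strictMonoOn_integral_inv hGc hGpos hx).monotoneOn
    ⟨hx.1.trans_le hxψ, hle.trans_lt hz⟩ ⟨hx.1.trans_le hxz, hz⟩ hle
  simp only [hψt] at this
  linarith

theorem exists_flow {x z T : ℝ} (hx : x ∈ Ioo (0 : ℝ) 1) (hz : z ∈ Ioo (0 : ℝ) 1) (hxz : x ≤ z)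
    (hT : ∫ s in x..z, (G s)⁻¹ = T) :
    ∃ u : ℝ → ℝ, u 0 = x ∧ u T = z ∧ ∀ τ ∈ Icc 0 T,
      u τ ∈ Icc x z ∧ ∫ s in x..u τ, (G s)⁻¹ = τ ∧ HasDerivAt u (G (u τ)) τ := by
  obtain ⟨u, hu⟩ := exists_hasDerivAt_inverse_of_deriv_pos
    (fun y hy => hasDerivAt_integral_inv hGc hGpos hx hy) (fun y hy => inv_pos.2 (hGpos y hy))
  have hsub : Icc x z ⊆ Ioo 0 1 := Icc_subset_Ioo hx.1 hz.2
  have hIVT := intermediate_value_Icc hxz fun y hy =>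
    (hasDerivAt_integral_inv hGc hGpos hx (hsub hy)).continuousAt.continuousWithinAt
  simp only [intervalIntegral.integral_same, hT] at hIVT
  refine ⟨u, by simpa using (hu x hx).1, by simpa [hT] using (hu z hz).1, fun τ hτ => ?_⟩
  obtain ⟨y, hy, rfl⟩ := hIVT hτ
  obtain ⟨hyu, hderiv⟩ := hu y (hsub hy)
  rw [hyu, ← inv_inv (G y)]
  exact ⟨hy, rfl, hderiv⟩

theorem exists_flow_of_assocPsi_lt_one {t x : ℝ} (hx : x ∈ Ioo (0 : ℝ) 1)
    (hψ : assocPsi G t x < 1) :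
    ∃ u : ℝ → ℝ, u 0 = x ∧ u t = assocPsi G t x ∧ ∀ τ ∈ Icc 0 t,
      u τ ∈ Ioo (0 : ℝ) 1 ∧ ∫ s in x..u τ, (G s)⁻¹ = τ ∧ HasDerivAt u (G (u τ)) τ := by
  obtain ⟨hxψ, hψt⟩ := assocPsi_spec hGc hGpos hx hψ
  obtain ⟨u, hu0, hut, hu⟩ :=
    exists_flow hGc hGpos hx ⟨hx.1.trans_le hxψ, hψ⟩ hxψ hψt
  exact ⟨u, hu0, hut, fun τ hτ => ⟨Icc_subset_Ioo hx.1 hψ (hu τ hτ).1, (hu τ hτ).2⟩⟩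

theorem integral_inv_comp {w w' : ℝ → ℝ} {t : ℝ} (ht : 0 ≤ t)
    (hw : ∀ τ ∈ Icc 0 t, HasDerivAt w (w' τ) τ) (hw' : ContinuousOn w' (Icc 0 t))
    (hmem : ∀ τ ∈ Icc 0 t, w τ ∈ Ioo (0 : ℝ) 1) :
    ∫ s in w 0..w t, (G s)⁻¹ = ∫ τ in 0..t, (G (w τ))⁻¹ * w' τ := by
  refine (intervalIntegral.integral_comp_mul_deriv' (by rwa [uIcc_of_le ht])
    (by rwa [uIcc_of_le ht]) ?_).symm
  rw [uIcc_of_le ht]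
  exact (continuousOn_inv_Ioo hGc hGpos).mono (image_subset_iff.2 hmem)

theorem lt_assocPsi_of_deriv_lt {w w' : ℝ → ℝ} {t : ℝ} (ht : 0 < t)
    (hw : ∀ τ ∈ Icc 0 t, HasDerivAt w (w' τ) τ) (hw' : ContinuousOn w' (Icc 0 t))
    (hmem : ∀ τ ∈ Icc 0 t, w τ ∈ Ioo (0 : ℝ) 1) (hle : w 0 ≤ w t)
    (hlt : ∀ τ ∈ Icc 0 t, w' τ < G (w τ)) : w t < assocPsi G t (w 0) := by
  have h0 : (0 : ℝ) ∈ Icc 0 t := left_mem_Icc.2 ht.le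
  have hlt_one : ∀ τ ∈ Icc 0 t, (G (w τ))⁻¹ * w' τ < 1 := fun τ hτ => by
    rw [inv_mul_lt_iff₀ (hGpos _ (hmem τ hτ)), mul_one]
    exact hlt τ hτ
  have hcont : ContinuousOn (fun τ => (G (w τ))⁻¹ * w' τ) (Icc 0 t) :=
    ((continuousOn_inv_Ioo hGc hGpos).comp
      (fun τ hτ => (hw τ hτ).continuousAt.continuousWithinAt) hmem).mul hw'
  refine lt_assocPsi_of_integral_lt hGc hGpos (hmem 0 h0) hle (hmem t (right_mem_Icc.2 ht.le)).2 ?_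
  calc ∫ s in w 0..w t, (G s)⁻¹ = ∫ τ in 0..t, (G (w τ))⁻¹ * w' τ :=
        integral_inv_comp hGc hGpos ht.le hw hw' hmem
    _ < ∫ _ in 0..t, (1 : ℝ) :=
        intervalIntegral.integral_lt_integral_of_continuousOn_of_le_of_exists_lt ht hcont
          continuousOn_const (fun τ hτ => (hlt_one τ (Ioc_subset_Icc_self hτ)).le)
          ⟨0, h0, hlt_one 0 h0⟩
    _ = t := by simp

theorem assocPsi_eq_of_hasDerivAt {w : ℝ → ℝ} {t : ℝ} (ht : 0 ≤ t)
    (hw : ∀ τ ∈ Icc 0 t, HasDerivAt w (G (w τ)) τ)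
    (hmem : ∀ τ ∈ Icc 0 t, w τ ∈ Ioo (0 : ℝ) 1) (hle : w 0 ≤ w t) :
    assocPsi G t (w 0) = w t := by
  have h0 : (0 : ℝ) ∈ Icc 0 t := left_mem_Icc.2 ht
  have hcont : ContinuousOn (fun τ => G (w τ)) (Icc 0 t) :=
    hGc.comp (fun τ hτ => (hw τ hτ).continuousAt.continuousWithinAt) hmem
  refine assocPsi_eq_of_integral_eq hGc hGpos (hmem 0 h0) hle (hmem t (right_mem_Icc.2 ht)).2 ?_
  rw [integral_inv_comp hGc hGpos ht hw hcont hmem]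
  calc ∫ τ in 0..t, (G (w τ))⁻¹ * G (w τ) = ∫ _ in 0..t, (1 : ℝ) :=
        intervalIntegral.integral_congr fun τ hτ => by
          rw [uIcc_of_le ht] at hτ
          exact inv_mul_cancel₀ (hGpos _ (hmem τ hτ)).ne'
    _ = t := by simp

end Flow

theorem assocPsi_zero {G : ℝ → ℝ} {t : ℝ} : assocPsi G t 0 = 0 := if_pos rfl

theorem assocPsi_one {G : ℝ → ℝ} {t : ℝ} : assocPsi G t 1 = 1 := by
  rw [assocPsi, if_neg one_ne_zero]
  refine le_antisymm (csInf_le ⟨1, ?_⟩ (Or.inr rfl)) (le_csInf ⟨1, Or.inr rfl⟩ ?_) <;>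
    rintro y (hy | rfl)
  exacts [hy.1.1, le_rfl, hy.1.1, le_rfl]

section Forward

variable {G : ℝ → ℝ} (hG : StrictConcaveOn ℝ (Ioo 0 1) G) (hGpos : ∀ x ∈ Ioo (0 : ℝ) 1, 0 < G x)
include hG hGpos

theorem mul_assocPsi_lt_assocPsi_mul {t y c : ℝ} (ht : 0 < t) (hy : y ∈ Ioo (0 : ℝ) 1)
    (hψ : assocPsi G t y < 1) (hc : c ∈ Ioo (0 : ℝ) 1) :
    c * assocPsi G t y < assocPsi G t (c * y) := by
  have hGc := hG.concaveOn.continuousOn isOpen_Ioo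
  obtain ⟨u, hu0, hut, hu⟩ := exists_flow_of_assocPsi_lt_one hGc hGpos hy hψ
  have hu_cont : ContinuousOn u (Icc 0 t) := fun τ hτ =>
    (hu τ hτ).2.2.continuousAt.continuousWithinAt
  have key := lt_assocPsi_of_deriv_lt hGc hGpos ht (w := fun τ => c * u τ)
    (fun τ hτ => (hu τ hτ).2.2.const_mul c)
    (continuousOn_const.mul (hGc.comp hu_cont fun τ hτ => (hu τ hτ).1))
    (fun τ hτ => ⟨mul_pos hc.1 (hu τ hτ).1.1,
      (mul_le_of_le_one_left (hu τ hτ).1.1.le hc.2.le).trans_lt (hu τ hτ).1.2⟩)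
    (by simpa only [hu0, hut] using
      mul_le_mul_of_nonneg_left (assocPsi_spec hGc hGpos hy hψ).1 hc.1.le)
    (fun τ hτ => hG.mul_lt_apply_mul (fun x hx => (hGpos x hx).le) (hu τ hτ).1 hc)
  simpa only [hu0, hut] using key

theorem comb_assocPsi_lt_assocPsi_comb {t x y l : ℝ} (ht : 0 < t) (hx : x ∈ Ioo (0 : ℝ) 1)
    (hy : y ∈ Ioo (0 : ℝ) 1) (hxy : x < y) (hψx : assocPsi G t x < 1)
    (hψy : assocPsi G t y < 1) (hl : l ∈ Ioo (0 : ℝ) 1) :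
    l * assocPsi G t x + (1 - l) * assocPsi G t y < assocPsi G t (l * x + (1 - l) * y) := by
  have hGc := hG.concaveOn.continuousOn isOpen_Ioo
  obtain ⟨u₁, hu₁0, hu₁t, hu₁⟩ := exists_flow_of_assocPsi_lt_one hGc hGpos hx hψx
  obtain ⟨u₂, hu₂0, hu₂t, hu₂⟩ := exists_flow_of_assocPsi_lt_one hGc hGpos hy hψy
  have hu_cont : ∀ u : ℝ → ℝ, (∀ τ ∈ Icc 0 t, HasDerivAt u (G (u τ)) τ) →
      ContinuousOn u (Icc 0 t) := fun u hu τ hτ => (hu τ hτ).continuousAt.continuousWithinAt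
  -- `H_x(u₂ τ) = H_x(y) + τ > τ = H_x(u₁ τ)`
  have hord : ∀ τ ∈ Icc 0 t, u₁ τ < u₂ τ := by
    intro τ hτ
    refine ((strictMonoOn_integral_inv hGc hGpos hx).lt_iff_lt (hu₁ τ hτ).1 (hu₂ τ hτ).1).1 ?_
    have hsplit := intervalIntegral.integral_add_adjacent_intervals
      (intervalIntegrable_inv hGc hGpos hx hy) (intervalIntegrable_inv hGc hGpos hy (hu₂ τ hτ).1)
    have hpos := strictMonoOn_integral_inv hGc hGpos hx hx hy hxy
    simp only [intervalIntegral.integral_same, (hu₂ τ hτ).2.1] at hpos hsplit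
    simp only [(hu₁ τ hτ).2.1, ← hsplit]
    linarith
  have key := lt_assocPsi_of_deriv_lt hGc hGpos ht (w := fun τ => l * u₁ τ + (1 - l) * u₂ τ)
    (fun τ hτ => ((hu₁ τ hτ).2.2.const_mul l).add ((hu₂ τ hτ).2.2.const_mul (1 - l)))
    ((continuousOn_const.mul (hGc.comp (hu_cont u₁ fun τ hτ => (hu₁ τ hτ).2.2)
      fun τ hτ => (hu₁ τ hτ).1)).add
      (continuousOn_const.mul (hGc.comp (hu_cont u₂ fun τ hτ => (hu₂ τ hτ).2.2)
      fun τ hτ => (hu₂ τ hτ).1)))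
    (fun τ hτ => (convex_Ioo 0 1).mul_add_one_sub_mul_mem (hu₁ τ hτ).1 (hu₂ τ hτ).1
      ⟨hl.1.le, hl.2.le⟩)
    (by
      simp only [hu₁0, hu₁t, hu₂0, hu₂t]
      exact add_le_add (mul_le_mul_of_nonneg_left (assocPsi_spec hGc hGpos hx hψx).1 hl.1.le)
        (mul_le_mul_of_nonneg_left (assocPsi_spec hGc hGpos hy hψy).1 (sub_nonneg.2 hl.2.le)))
    (fun τ hτ => (strictConcaveOn_iff_forall_lt (convex_Ioo 0 1)).1 hG _ (hu₁ τ hτ).1 _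
      (hu₂ τ hτ).1 (hord τ hτ).ne l hl)
  simpa only [hu₁0, hu₁t, hu₂0, hu₂t] using key

theorem assocPsi_strictConcave {t : ℝ} (ht : 0 < t) :
    ∀ x, x ∈ Icc (0 : ℝ) 1 ∧ assocPsi G t x < 1 →
    ∀ y, y ∈ Icc (0 : ℝ) 1 ∧ assocPsi G t y < 1 →
    x ≠ y → ∀ l ∈ Ioo (0 : ℝ) 1,
      l * assocPsi G t x + (1 - l) * assocPsi G t y < assocPsi G t (l * x + (1 - l) * y) := by
  intro x hx y hy hxy l hl
  have hl' : 1 - l ∈ Ioo (0 : ℝ) 1 := ⟨sub_pos.2 hl.2, by linarith [hl.1]⟩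
  wlog hlt : x < y generalizing x y l
  · have := this y hy x hx hxy.symm (1 - l) hl' (by rwa [sub_sub_cancel])
      (lt_of_le_of_ne (not_lt.1 hlt) hxy.symm)
    rwa [sub_sub_cancel, add_comm ((1 - l) * y), add_comm ((1 - l) * assocPsi G t y)] at this
  have hy1 : y < 1 :=
    lt_of_le_of_ne hy.1.2 (by rintro rfl; exact (assocPsi_one (G := G)).not_lt hy.2)
  rcases hx.1.1.eq_or_lt with rfl | hx0
  · simpa only [assocPsi_zero, mul_zero, zero_add] using
      mul_assocPsi_lt_assocPsi_mul hG hGpos ht ⟨hlt, hy1⟩ hy.2 hl'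
  · exact comb_assocPsi_lt_assocPsi_comb hG hGpos ht ⟨hx0, hlt.trans hy1⟩ ⟨hx0.trans hlt, hy1⟩
      hlt hx.2 hy.2 hl

end Forward

theorem ConcaveOn.chord_le {s : Set ℝ} {G : ℝ → ℝ} (hG : ConcaveOn ℝ s G) {x y p : ℝ}
    (hx : x ∈ s) (hy : y ∈ s) (hxy : x < y) (hp : p ∈ Icc x y) :
    G x * (y - p) + G y * (p - x) ≤ G p * (y - x) := by
  have hyx : 0 < y - x := sub_pos.2 hxy
  have h := hG.2 hx hy (div_nonneg (sub_nonneg.2 hp.2) hyx.le)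
    (div_nonneg (sub_nonneg.2 hp.1) hyx.le)
    (by rw [← add_div, sub_add_sub_cancel, div_self hyx.ne'])
  have hcomb : (y - p) / (y - x) * x + (p - x) / (y - x) * y = p := by field_simp; ring
  simp only [smul_eq_mul, hcomb] at h
  calc G x * (y - p) + G y * (p - x)
      = ((y - p) / (y - x) * G x + (p - x) / (y - x) * G y) * (y - x) := by field_simp
    _ ≤ G p * (y - x) := mul_le_mul_of_nonneg_right h hyx.le

theorem ConcaveOn.eq_chord_of_apply_le {s : Set ℝ} {G : ℝ → ℝ} (hG : ConcaveOn ℝ s G)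
    {x y l : ℝ} (hx : x ∈ s) (hy : y ∈ s) (hxy : x < y) (hl : l ∈ Ioo (0 : ℝ) 1)
    (hle : G (l * x + (1 - l) * y) ≤ l * G x + (1 - l) * G y) :
    ∀ p ∈ Icc x y, G p * (y - x) = G x * (y - p) + G y * (p - x) := by
  set m := l * x + (1 - l) * y
  have hm : m ∈ Ioo x y := ⟨by nlinarith [hl.2], by nlinarith [hl.1]⟩
  have hmeq : G m * (y - x) = G x * (y - m) + G y * (m - x) := by
    refine le_antisymm ?_ (hG.chord_le hx hy hxy ⟨hm.1.le, hm.2.le⟩)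
    nlinarith [mul_le_mul_of_nonneg_right hle (sub_pos.2 hxy).le]
  intro p hp
  have hps : p ∈ s := hG.1.ordConnected.out hx hy hp
  refine le_antisymm ?_ (hG.chord_le hx hy hxy hp)
  -- the chord through `p` and an endpoint passes below `(m, G m)`, which lies on the chord
  rcases le_total p m with hpm | hmp
  · have h := hG.chord_le hps hy (hpm.trans_lt hm.2) ⟨hpm, hm.2.le⟩
    nlinarith [mul_le_mul_of_nonneg_left h (sub_pos.2 hxy).le, hm.2]
  · have h := hG.chord_le hx hps (hm.1.trans_le hmp) ⟨hm.1.le, hmp⟩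
    nlinarith [mul_le_mul_of_nonneg_left h (sub_pos.2 hxy).le, hm.1]

theorem comb_assocPsi_eq_of_eq_chord {G : ℝ → ℝ} (hGc : ContinuousOn G (Ioo 0 1))
    (hGpos : ∀ x ∈ Ioo (0 : ℝ) 1, 0 < G x) {x m y l t : ℝ} (hx : x ∈ Ioo (0 : ℝ) 1)
    (hy : y ∈ Ioo (0 : ℝ) 1) (hxm : x < m) (hmy : m < y) (hl : l ∈ Ioo (0 : ℝ) 1)
    (haff : ∀ p ∈ Icc x y, G p * (y - x) = G x * (y - p) + G y * (p - x))
    (ht : ∫ s in m..y, (G s)⁻¹ = t) :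
    assocPsi G t x < 1 ∧ assocPsi G t m < 1 ∧
      l * assocPsi G t x + (1 - l) * assocPsi G t m = assocPsi G t (l * x + (1 - l) * m) := by
  have hm : m ∈ Ioo (0 : ℝ) 1 := ⟨hx.1.trans hxm, hmy.trans hy.2⟩
  have hl' : l ∈ Icc (0 : ℝ) 1 := ⟨hl.1.le, hl.2.le⟩
  obtain ⟨u₁, hu₁0, -, hu₁⟩ := exists_flow hGc hGpos hx hy (hxm.trans hmy).le rfl
  obtain ⟨u₂, hu₂0, hu₂t, hu₂⟩ := exists_flow hGc hGpos hm hy hmy.le ht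
  have ht0 : 0 ≤ t := by simpa [ht] using (strictMonoOn_integral_inv hGc hGpos hm hm hy hmy).le
  have htx : t ≤ ∫ s in x..y, (G s)⁻¹ := by
    rw [← ht, ← intervalIntegral.integral_interval_sub_left (intervalIntegrable_inv hGc hGpos hx hy)
      (intervalIntegrable_inv hGc hGpos hx hm)]
    simpa using (strictMonoOn_integral_inv hGc hGpos hx hx hm hxm).le
  have hu₁' : ∀ τ ∈ Icc 0 t, u₁ τ ∈ Icc x y ∧ ∫ s in x..u₁ τ, (G s)⁻¹ = τ ∧
      HasDerivAt u₁ (G (u₁ τ)) τ := fun τ hτ => hu₁ τ ⟨hτ.1, hτ.2.trans htx⟩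
  have hu₂' : ∀ τ ∈ Icc 0 t, u₂ τ ∈ Icc x y := fun τ hτ =>
    Icc_subset_Icc_left hxm.le (hu₂ τ hτ).1
  have htt : t ∈ Icc 0 t := right_mem_Icc.2 ht0
  have hψx : assocPsi G t x = u₁ t := assocPsi_eq_of_integral_eq hGc hGpos hx (hu₁' t htt).1.1
    ((hu₁' t htt).1.2.trans_lt hy.2) (hu₁' t htt).2.1
  have hψm : assocPsi G t m = y := assocPsi_eq_of_integral_eq hGc hGpos hm hmy.le hy.2 ht
  have hw := assocPsi_eq_of_hasDerivAt hGc hGpos ht0 (w := fun τ => l * u₁ τ + (1 - l) * u₂ τ)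
    (fun τ hτ => by
      have hcomb := (convex_Icc x y).mul_add_one_sub_mul_mem (hu₁' τ hτ).1 (hu₂' τ hτ) hl'
      refine (((hu₁' τ hτ).2.2.const_mul l).add ((hu₂ τ hτ).2.2.const_mul (1 - l))).congr_deriv
        (mul_right_cancel₀ (sub_pos.2 (hxm.trans hmy)).ne' ?_)
      linear_combination l * haff _ (hu₁' τ hτ).1 + (1 - l) * haff _ (hu₂' τ hτ) - haff _ hcomb)
    (fun τ hτ => Icc_subset_Ioo hx.1 hy.2
      ((convex_Icc x y).mul_add_one_sub_mul_mem (hu₁' τ hτ).1 (hu₂' τ hτ) hl'))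
    (by
      simp only [hu₁0, hu₂0, hu₂t]
      exact add_le_add (mul_le_mul_of_nonneg_left (hu₁' t htt).1.1 hl.1.le)
        (mul_le_mul_of_nonneg_left hmy.le (sub_nonneg.2 hl.2.le)))
  refine ⟨hψx ▸ (hu₁' t htt).1.2.trans_lt hy.2, hψm ▸ hy.2, ?_⟩
  simpa only [hψx, hψm, hu₁0, hu₂0, hu₂t] using hw.symm

theorem strictConcaveOn_of_assocPsi {G : ℝ → ℝ} (hG : ConcaveOn ℝ (Ioo 0 1) G)
    (hGpos : ∀ x ∈ Ioo (0 : ℝ) 1, 0 < G x)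
    (hψ : ∀ t > (0 : ℝ),
      ∀ x, x ∈ Icc (0 : ℝ) 1 ∧ assocPsi G t x < 1 →
      ∀ y, y ∈ Icc (0 : ℝ) 1 ∧ assocPsi G t y < 1 →
      x ≠ y → ∀ l ∈ Ioo (0 : ℝ) 1,
        l * assocPsi G t x + (1 - l) * assocPsi G t y < assocPsi G t (l * x + (1 - l) * y)) :
    StrictConcaveOn ℝ (Ioo 0 1) G := by
  have hGc := hG.continuousOn isOpen_Ioo
  refine LinearOrder.strictConcaveOn_of_lt (convex_Ioo 0 1) fun x hx y hy hxy a b ha _ hab => ?_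
  obtain rfl : b = 1 - a := by linarith
  by_contra! hle
  simp only [smul_eq_mul] at hle
  obtain ⟨m, hxm, hmy⟩ := exists_between hxy
  have hm : m ∈ Ioo (0 : ℝ) 1 := ⟨hx.1.trans hxm, hmy.trans hy.2⟩
  have ht : 0 < ∫ s in m..y, (G s)⁻¹ := by
    simpa using strictMonoOn_integral_inv hGc hGpos hm hm hy hmy
  have hhalf : (1 / 2 : ℝ) ∈ Ioo 0 1 := ⟨by norm_num, by norm_num⟩
  obtain ⟨hψx, hψm, heq⟩ := comb_assocPsi_eq_of_eq_chord hGc hGpos hx hy hxm hmy hhalf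
    (hG.eq_chord_of_apply_le hx hy hxy ⟨ha, by linarith⟩ hle) rfl
  exact (hψ _ ht x ⟨⟨hx.1.le, hx.2.le⟩, hψx⟩ m ⟨⟨hm.1.le, hm.2.le⟩, hψm⟩ hxm.ne _ hhalf).ne heq

/-- `G` is strictly concave on `(0,1)` if and only if, for every
`t > 0`, `Ψ_t` is strictly concave on the set `{x ∈ [0,1] : Ψ_t(x) < 1}`. -/
theorem stmt_5 (G : ℝ → ℝ)
    (hG : ConcaveOn ℝ (Set.Ioo 0 1) G)
    (hGpos : ∀ x ∈ Set.Ioo (0:ℝ) 1, 0 < G x) :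
    (∀ x ∈ Set.Ioo (0:ℝ) 1, ∀ y ∈ Set.Ioo (0:ℝ) 1, x ≠ y →
        ∀ l ∈ Set.Ioo (0:ℝ) 1,
          l * G x + (1 - l) * G y < G (l * x + (1 - l) * y))
      ↔
    (∀ t > (0:ℝ),
      ∀ x, x ∈ Set.Icc (0:ℝ) 1 ∧ assocPsi G t x < 1 →
      ∀ y, y ∈ Set.Icc (0:ℝ) 1 ∧ assocPsi G t y < 1 →
      x ≠ y → ∀ l ∈ Set.Ioo (0:ℝ) 1,
        l * assocPsi G t x + (1 - l) * assocPsi G t y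
          < assocPsi G t (l * x + (1 - l) * y)) := by
  rw [← strictConcaveOn_iff_forall_lt (convex_Ioo 0 1)]
  exact ⟨fun hs _ ht => assocPsi_strictConcave hs hGpos ht, strictConcaveOn_of_assocPsi hG hGpos⟩
end

section
/- Let (Ψ_t)_{t≥0} be a concave distortion semigroup which is not the identity family, i.e. there exist t≥0 and x∈[0,1] with Ψ_t(x)≠x. Then for every x∈(0,1], lim_{t→∞} Ψ_t(x) = 1. -/
open Set MeasureTheory Filter Topology

/-! A concave distortion lies above the diagonal, so each orbit `t ↦ Ψ_t x` is nondecreasing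
and converges to some `L ∈ [x, 1]`. If `L < 1`, continuity of `Ψ_s` inside `(0, 1)` turns
`Ψ_s (Ψ_t x) = Ψ_{s+t} x` into `Ψ_s L = L`. But `Ψ_s - id` is concave, nonnegative and vanishes
at the interior point `L`, hence vanishes on `[0, 1]`: every `Ψ_s` would be the identity. -/

lemma MonotoneOn.tendsto_atTop_ciSup_Ici {ι α : Type*} [Preorder ι] [IsDirectedOrder ι]
    [ConditionallyCompleteLinearOrder α] [TopologicalSpace α] [OrderTopology α]
    {f : ι → α} {a : ι} (hf : MonotoneOn f (Ici a))
    (hb : BddAbove (f '' Ici a)) : Tendsto f atTop (𝓝 (⨆ t : Ici a, f t)) := by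
  rw [← map_val_Ici_atTop a, tendsto_map'_iff]
  exact tendsto_atTop_ciSup (fun s t hst => hf s.2 t.2 hst) (by rwa [image_eq_range] at hb)

lemma ConcaveOn.eqOn_zero_of_nonneg {f : ℝ → ℝ} {a b c : ℝ} (hf : ConcaveOn ℝ (Icc a b) f)
    (hnonneg : ∀ x ∈ Icc a b, 0 ≤ f x) (hc : c ∈ Ioo a b) (hfc : f c = 0) :
    EqOn f 0 (Icc a b) := by
  intro z hz
  have hab : a ≤ b := hz.1.trans hz.2
  refine le_antisymm ?_ (hnonneg z hz)
  rcases lt_or_ge z c with hzc | hcz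
  · have := hf.left_le_of_le_right'' hz (right_mem_Icc.2 hab) hzc.le hc.2
      (hfc ▸ hnonneg b (right_mem_Icc.2 hab))
    rwa [hfc] at this
  · have := hf.right_le_of_le_left'' (left_mem_Icc.2 hab) hz hc.1 hcz
      (hfc ▸ hnonneg a (left_mem_Icc.2 hab))
    rwa [hfc] at this

namespace IsConcaveDistortion

variable {Ψ : ℝ → ℝ}

lemma le_apply (h : IsConcaveDistortion Ψ) {x : ℝ} (hx : x ∈ Icc (0 : ℝ) 1) :
    x ≤ Ψ x := by
  obtain ⟨-, hc, h0, h1⟩ := h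
  have := hc.2 (left_mem_Icc.2 zero_le_one) (right_mem_Icc.2 zero_le_one)
    (sub_nonneg.2 hx.2) hx.1 (sub_add_cancel 1 x)
  simp only [smul_eq_mul, mul_zero, mul_one, zero_add, h0, h1] at this
  exact this

lemma apply_mem_Icc (h : IsConcaveDistortion Ψ) {x : ℝ} (hx : x ∈ Icc (0 : ℝ) 1) :
    Ψ x ∈ Icc (0 : ℝ) 1 :=
  ⟨hx.1.trans (h.le_apply hx),
    h.2.2.2 ▸ h.1 hx (right_mem_Icc.2 zero_le_one) hx.2⟩

lemma continuousAt (h : IsConcaveDistortion Ψ) {x : ℝ} (hx : x ∈ Ioo (0 : ℝ) 1) :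
    ContinuousAt Ψ x :=
  h.2.1.continuousOn_interior.continuousAt (by rw [interior_Icc]; exact Ioo_mem_nhds hx.1 hx.2)

lemma eqOn_id_of_apply_eq (h : IsConcaveDistortion Ψ) {L : ℝ} (hL : L ∈ Ioo (0 : ℝ) 1)
    (hfix : Ψ L = L) : EqOn Ψ id (Icc 0 1) := by
  have hzero := (h.2.1.sub (convexOn_id (convex_Icc 0 1))).eqOn_zero_of_nonneg
    (fun x hx => sub_nonneg.2 (h.le_apply hx)) hL (sub_eq_zero.2 hfix)
  exact fun z hz => sub_eq_zero.1 (hzero hz)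

end IsConcaveDistortion

namespace IsConcaveDistortionSemigroup

variable {Ψ : ℝ → ℝ → ℝ}

lemma monotoneOn_apply (hΨ : IsConcaveDistortionSemigroup Ψ) {x : ℝ}
    (hx : x ∈ Icc (0 : ℝ) 1) : MonotoneOn (fun t => Ψ t x) (Ici 0) := by
  intro s hs t ht hst
  have hsplit := hΨ.2 (t - s) s (sub_nonneg.2 hst) hs x hx
  rw [sub_add_cancel] at hsplit
  change Ψ s x ≤ Ψ t x
  rw [← hsplit]
  exact (hΨ.1 _ (sub_nonneg.2 hst)).le_apply ((hΨ.1 s hs).apply_mem_Icc hx)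

lemma exists_tendsto_atTop (hΨ : IsConcaveDistortionSemigroup Ψ) {x : ℝ}
    (hx : x ∈ Icc (0 : ℝ) 1) : ∃ L ∈ Icc x 1, Tendsto (fun t => Ψ t x) atTop (𝓝 L) := by
  have hbdd : BddAbove ((fun t => Ψ t x) '' Ici 0) := by
    refine ⟨1, ?_⟩
    rintro _ ⟨t, ht, rfl⟩
    exact ((hΨ.1 t ht).apply_mem_Icc hx).2
  refine ⟨_, ⟨?_, ?_⟩, (hΨ.monotoneOn_apply hx).tendsto_atTop_ciSup_Ici hbdd⟩
  · rw [image_eq_range] at hbdd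
    exact ((hΨ.1 0 le_rfl).le_apply hx).trans (le_ciSup hbdd ⟨0, self_mem_Ici⟩)
  · exact ciSup_le fun t => ((hΨ.1 t t.2).apply_mem_Icc hx).2

lemma apply_eq_of_tendsto (hΨ : IsConcaveDistortionSemigroup Ψ) {x L : ℝ}
    (hx : x ∈ Icc (0 : ℝ) 1) (hL : L ∈ Ioo (0 : ℝ) 1)
    (hlim : Tendsto (fun t => Ψ t x) atTop (𝓝 L)) {s : ℝ} (hs : 0 ≤ s) : Ψ s L = L := by
  have hcont : Tendsto (fun t => Ψ s (Ψ t x)) atTop (𝓝 (Ψ s L)) :=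
    ((hΨ.1 s hs).continuousAt hL).tendsto.comp hlim
  have hshift : Tendsto (fun t => Ψ s (Ψ t x)) atTop (𝓝 L) := by
    refine (hlim.comp (tendsto_atTop_add_const_left _ s tendsto_id)).congr' ?_
    filter_upwards [eventually_ge_atTop 0] with t ht
    exact (hΨ.2 s t hs ht x hx).symm
  exact tendsto_nhds_unique hcont hshift

end IsConcaveDistortionSemigroup

/-- a concave distortion semigroup which is not the identity family
satisfies `lim_{t→∞} Ψ_t(x) = 1` for every `x ∈ (0,1]`. -/
theorem stmt_10 (Ψ : ℝ → ℝ → ℝ) (hΨ : IsConcaveDistortionSemigroup Ψ)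
    (hnt : ∃ t, 0 ≤ t ∧ ∃ x ∈ Set.Icc (0:ℝ) 1, Ψ t x ≠ x) :
    ∀ x ∈ Set.Ioc (0:ℝ) 1,
      Filter.Tendsto (fun t => Ψ t x) Filter.atTop (nhds 1) := by
  intro x hx
  obtain ⟨L, hL, hlim⟩ := hΨ.exists_tendsto_atTop (Ioc_subset_Icc_self hx)
  rcases hL.2.eq_or_lt with rfl | hL1
  · exact hlim
  have hLint : L ∈ Ioo (0 : ℝ) 1 := ⟨hx.1.trans_le hL.1, hL1⟩
  obtain ⟨t, ht, y, hy, hne⟩ := hnt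
  exact absurd ((hΨ.1 t ht).eqOn_id_of_apply_eq hLint
    (hΨ.apply_eq_of_tendsto (Ioc_subset_Icc_self hx) hLint hlim ht) hy) hne
end
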